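/- Let U and Y be random variables on a probability space with U > 0 almost surely and Y > 0 almost surely, let β > 0, and let s_Y ∈ (0,∞) be such that M_Y(s) = E[e^{sY}] < ∞ for all s < s_Y and M_Y(s) → ∞ as s → s_Y from the left. Then for every r < 0 there exist α₁ ∈ (−s_Y, 0) and α₂ ∈ (0,∞) with α₁ ≠ α₂ such that α₁β + M_U(r)·M_Y(−α₁) − 1 = 0 and α₂β + M_U(r)·M_Y(−α₂) − 1 = 0, where M_U(r) = E[e^{rU}]. In particular, the equation αβ + M_U(r)M_Y(−α) − 1 = 0 has two distinct real solutions. -/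

import Mathlib

/-!
Write `g(α) = αβ + c M_Y(−α) − 1` with `c = M_U(r)`. Since `U > 0` and `r < 0`, `0 < c < 1`,
so `g(0) = c − 1 < 0`. For large `α > 0` the linear term makes `g` positive, while as `α ↓ −s_Y`
the blow-up of `M_Y` does; `M_Y` is continuous below `s_Y` (it is analytic on the interior of the
set where `exp (s Y)` is integrable), so the intermediate value theorem gives a root on each side
of `0`.
-/

open MeasureTheory ProbabilityTheory Real Set Filter Topology

lemma integral_pos_of_ae_pos {α : Type*} [MeasurableSpace α] {μ : Measure α} [NeZero μ]
    {f : α → ℝ} (hf : ∀ᵐ x ∂μ, 0 < f x) (hfi : Integrable f μ) : 0 < ∫ x, f x ∂μ := by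
  rw [integral_pos_iff_support_of_nonneg_ae (hf.mono fun _ hx => hx.le) hfi,
    measure_congr (ae_eq_univ.2 (measure_mono_null (fun x hx => ?_) (ae_iff.1 hf))),
    Measure.measure_univ_pos]
  · exact NeZero.ne μ
  · exact fun h => hx (Function.mem_support.2 h.ne')

namespace ProbabilityTheory

variable {Ω : Type*} [MeasurableSpace Ω] {μ : Measure Ω} {X : Ω → ℝ} {t : ℝ}

lemma integrable_exp_mul_of_nonpos_of_ae_nonneg [IsFiniteMeasure μ] (hX : AEMeasurable X μ)
    (hpos : ∀ᵐ ω ∂μ, 0 ≤ X ω) (ht : t ≤ 0) : Integrable (fun ω => exp (t * X ω)) μ := by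
  refine .of_mem_Icc 0 1 (measurable_exp.comp_aemeasurable (hX.const_mul t)) ?_
  filter_upwards [hpos] with ω hω
  exact ⟨(exp_pos _).le, exp_le_one_iff.2 (mul_nonpos_of_nonpos_of_nonneg ht hω)⟩

lemma mgf_lt_one_of_neg_of_ae_pos [IsProbabilityMeasure μ] (hX : AEMeasurable X μ)
    (hpos : ∀ᵐ ω ∂μ, 0 < X ω) (ht : t < 0) : mgf X μ t < 1 := by
  have hint := integrable_exp_mul_of_nonpos_of_ae_nonneg hX (hpos.mono fun _ h => h.le) ht.le
  have hgap : 0 < ∫ ω, (1 - exp (t * X ω)) ∂μ := by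
    refine integral_pos_of_ae_pos ?_ ((integrable_const 1).sub hint)
    filter_upwards [hpos] with ω hω
    exact sub_pos.2 (exp_lt_one_iff.2 (mul_neg_of_neg_of_pos ht hω))
  rw [integral_sub (integrable_const 1) hint, integral_const, probReal_univ, one_smul] at hgap
  exact sub_pos.1 hgap

lemma continuousOn_mgf_Iio {s : ℝ} (h : ∀ t < s, Integrable (fun ω => exp (t * X ω)) μ) :
    ContinuousOn (mgf X μ) (Iio s) :=
  continuousOn_mgf.mono (interior_maximal (fun t ht => h t ht) isOpen_Iio)

end ProbabilityTheory

namespace Lundberg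

variable {M : ℝ → ℝ} {c β s : ℝ}

lemma continuousOn {S : Set ℝ} (hM : ContinuousOn M S) (c β : ℝ) :
    ContinuousOn (fun α => α * β + c * M (-α) - 1) (-S) :=
  ((continuousOn_id.mul continuousOn_const).add
    (continuousOn_const.mul (hM.comp continuousOn_neg fun _ h => h))).sub continuousOn_const

lemma exists_pos_root (hβ : 0 < β) (hc : 0 ≤ c) (hM : ∀ t, 0 ≤ M t)
    (hcont : ContinuousOn M (Iic 0)) (h0 : c * M 0 < 1) :
    ∃ α ∈ Ioi (0 : ℝ), α * β + c * M (-α) - 1 = 0 := by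
  have hg := (continuousOn hcont c β).mono fun α (hα : α ∈ Icc 0 (2 / β)) =>
    show -α ≤ 0 by linarith [hα.1]
  have hend : 0 < 2 / β * β + c * M (-(2 / β)) - 1 := by
    rw [div_mul_cancel₀ 2 hβ.ne']
    linarith [mul_nonneg hc (hM (-(2 / β)))]
  obtain ⟨α, hα, hroot⟩ := intermediate_value_Ioo (by positivity) hg ⟨by simpa using h0, hend⟩
  exact ⟨α, hα.1, hroot⟩

lemma exists_neg_root_of_tendsto_atTop (hc : 0 < c) (hs : 0 < s)
    (hcont : ContinuousOn M (Iio s)) (hM : Tendsto M (𝓝[<] s) atTop) (h0 : c * M 0 < 1) :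
    ∃ α ∈ Ioo (-s) 0, α * β + c * M (-α) - 1 = 0 := by
  obtain ⟨t, hbig, ht0, hts⟩ : ∃ t, (2 + s * |β|) / c ≤ M t ∧ 0 < t ∧ t < s :=
    ((hM.eventually (eventually_ge_atTop _)).and
      ((eventually_nhdsWithin_of_eventually_nhds (eventually_gt_nhds hs)).and
        self_mem_nhdsWithin)).exists
  have hg := (continuousOn hcont c β).mono fun α (hα : α ∈ Icc (-t) 0) =>
    show -α < s by linarith [hα.1]
  have hend : 0 < -t * β + c * M (-(-t)) - 1 := by
    have hMt : 2 + s * |β| ≤ c * M t := (div_le_iff₀' hc).1 hbig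
    have hlin : t * β ≤ s * |β| := (mul_le_mul_of_nonneg_left (le_abs_self β) ht0.le).trans
      (mul_le_mul_of_nonneg_right hts.le (abs_nonneg β))
    rw [neg_neg]
    linarith
  obtain ⟨α, hα, hroot⟩ := intermediate_value_Ioo' (by linarith) hg ⟨by simpa using h0, hend⟩
  exact ⟨α, ⟨by linarith [hα.1], hα.2⟩, hroot⟩

end Lundberg

theorem lundberg_equation_two_roots_neg_r_general
    {Ω : Type*} [MeasurableSpace Ω] (P : Measure Ω) [IsProbabilityMeasure P]
    (U Y : Ω → ℝ) (hUmeas : Measurable U)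
    (hUpos : ∀ᵐ ω ∂P, 0 < U ω)
    (β : ℝ) (hβ : 0 < β)
    (sY : ℝ) (hsY : 0 < sY)
    (hYfin : ∀ s < sY, Integrable (fun ω => Real.exp (s * Y ω)) P)
    (hYblow : Filter.Tendsto (fun s => mgf Y P s)
      (nhdsWithin sY (Set.Iio sY)) Filter.atTop) :
    ∀ r < (0 : ℝ), ∃ α₁ ∈ Set.Ioo (-sY) (0 : ℝ), ∃ α₂ ∈ Set.Ioi (0 : ℝ),
      α₁ ≠ α₂ ∧
      α₁ * β + mgf U P r * mgf Y P (-α₁) - 1 = 0 ∧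
      α₂ * β + mgf U P r * mgf Y P (-α₂) - 1 = 0 := by
  intro r hr
  have hm_pos : 0 < mgf U P r := mgf_pos (integrable_exp_mul_of_nonpos_of_ae_nonneg
    hUmeas.aemeasurable (hUpos.mono fun _ h => h.le) hr.le)
  have hm_lt : mgf U P r * mgf Y P 0 < 1 := by
    simpa using mgf_lt_one_of_neg_of_ae_pos hUmeas.aemeasurable hUpos hr
  have hcont := continuousOn_mgf_Iio hYfin
  obtain ⟨α₁, hα₁, h₁⟩ :=
    Lundberg.exists_neg_root_of_tendsto_atTop hm_pos hsY hcont hYblow hm_lt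
  obtain ⟨α₂, hα₂, h₂⟩ := Lundberg.exists_pos_root hβ hm_pos.le (fun _ => mgf_nonneg)
    (hcont.mono fun _ (h : _ ≤ 0) => h.trans_lt hsY) hm_lt
  exact ⟨α₁, hα₁, α₂, hα₂, (hα₁.2.trans hα₂).ne, h₁, h₂⟩

/-- For `r < 0` the equation `αβ + M_U(r) M_Y(−α) − 1 = 0` has two distinct real
solutions, one in `(−s_Y, 0)` and one in `(0, ∞)`. -/
theorem lundberg_equation_two_roots_neg_r
    {Ω : Type*} [MeasurableSpace Ω] (P : Measure Ω) [IsProbabilityMeasure P]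
    (U Y : Ω → ℝ) (hUmeas : Measurable U) (hYmeas : Measurable Y)
    (hUpos : ∀ᵐ ω ∂P, 0 < U ω) (hYpos : ∀ᵐ ω ∂P, 0 < Y ω)
    (β : ℝ) (hβ : 0 < β)
    (sY : ℝ) (hsY : 0 < sY)
    (hYfin : ∀ s < sY, Integrable (fun ω => Real.exp (s * Y ω)) P)
    (hYblow : Filter.Tendsto (fun s => mgf Y P s)
      (nhdsWithin sY (Set.Iio sY)) Filter.atTop) :
    ∀ r < (0 : ℝ), ∃ α₁ ∈ Set.Ioo (-sY) (0 : ℝ), ∃ α₂ ∈ Set.Ioi (0 : ℝ),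
      α₁ ≠ α₂ ∧
      α₁ * β + mgf U P r * mgf Y P (-α₁) - 1 = 0 ∧
      α₂ * β + mgf U P r * mgf Y P (-α₂) - 1 = 0 :=
  lundberg_equation_two_roots_neg_r_general P U Y hUmeas hUpos β hβ sY hsY hYfin hYblow
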